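/- Conversely, if ‖w‖₂ ≤ θ‖u‖₂ with θ = (β-α)/(β+α) and v = ((α+β)/2)(u + w), then the sector constraint (v - αu)ᵀ(βu - v) ≥ 0 holds. -/

import Mathlib

/-!
Writing `a = ((β - α) / 2) • u` and `b = ((α + β) / 2) • w`, the two factors of the sector
form are `a + b` and `a - b`, so the form equals `‖a‖² - ‖b‖²`; multiplying the hypothesis on `w`
by `|α + β| / 2` gives `‖b‖ ≤ ‖a‖`.
-/

open scoped InnerProductSpace

theorem real_inner_add_sub_eq_norm_sq_sub_norm_sq {F : Type*} [NormedAddCommGroup F]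
    [InnerProductSpace ℝ F] (x y : F) : ⟪x + y, x - y⟫_ℝ = ‖x‖ ^ 2 - ‖y‖ ^ 2 := by
  rw [inner_add_left, inner_sub_right, inner_sub_right, real_inner_self_eq_norm_sq,
    real_inner_self_eq_norm_sq, real_inner_comm y x]
  ring

theorem real_inner_add_sub_nonneg_of_norm_le {F : Type*} [NormedAddCommGroup F]
    [InnerProductSpace ℝ F] {x y : F} (h : ‖y‖ ≤ ‖x‖) : 0 ≤ ⟪x + y, x - y⟫_ℝ := by
  rw [real_inner_add_sub_eq_norm_sq_sub_norm_sq]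
  exact sub_nonneg.2 (pow_le_pow_left₀ (norm_nonneg y) h 2)

theorem abs_mul_div_le_abs (s t : ℝ) : |t| * (s / t) ≤ |s| := by
  rcases eq_or_ne t 0 with rfl | ht
  · simp
  · calc |t| * (s / t) ≤ |t| * |s / t| := mul_le_mul_of_nonneg_left (le_abs_self _) (abs_nonneg t)
      _ = |s| := by rw [← abs_mul, mul_div_cancel₀ s ht]

theorem norm_smul_le_norm_smul_of_norm_le_div_mul {E : Type*} [SeminormedAddCommGroup E]
    [NormedSpace ℝ E] {s t : ℝ} {u w : E} (hw : ‖w‖ ≤ s / t * ‖u‖) : ‖t • w‖ ≤ ‖s • u‖ := by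
  rw [norm_smul, norm_smul, Real.norm_eq_abs, Real.norm_eq_abs]
  calc |t| * ‖w‖ ≤ |t| * (s / t * ‖u‖) := mul_le_mul_of_nonneg_left hw (abs_nonneg t)
    _ = |t| * (s / t) * ‖u‖ := (mul_assoc _ _ _).symm
    _ ≤ |s| * ‖u‖ := mul_le_mul_of_nonneg_right (abs_mul_div_le_abs s t) (norm_nonneg u)

theorem norm_bound_to_sector_general (m : ℕ) (α β : ℝ)
    (u w : EuclideanSpace ℝ (Fin m))
    (hw : ‖w‖ ≤ ((β - α) / (β + α)) * ‖u‖) :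
    inner ℝ (((α + β) / 2) • (u + w) - α • u)
      (β • u - ((α + β) / 2) • (u + w)) ≥ (0 : ℝ) := by
  have hnorm : ‖((α + β) / 2) • w‖ ≤ ‖((β - α) / 2) • u‖ := by
    refine norm_smul_le_norm_smul_of_norm_le_div_mul ?_
    rwa [div_div_div_cancel_right₀ two_ne_zero, add_comm α β]
  have hplus : ((α + β) / 2) • (u + w) - α • u = ((β - α) / 2) • u + ((α + β) / 2) • w := by
    module
  have hminus : β • u - ((α + β) / 2) • (u + w) = ((β - α) / 2) • u - ((α + β) / 2) • w := by
    module
  rw [hplus, hminus]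
  exact real_inner_add_sub_nonneg_of_norm_le hnorm

theorem norm_bound_to_sector (m : ℕ) (α β : ℝ) (hα : 0 < α) (hαβ : α ≤ β)
    (u w : EuclideanSpace ℝ (Fin m))
    (hw : ‖w‖ ≤ ((β - α) / (β + α)) * ‖u‖) :
    inner ℝ (((α + β) / 2) • (u + w) - α • u)
      (β • u - ((α + β) / 2) • (u + w)) ≥ (0 : ℝ) :=
  norm_bound_to_sector_general m α β u w hw
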